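/- The S-linear map N^2 → N^4 sending a row vector v = (n₁, n₂) to vX̄ = (s n₁, s n₂, t n₁, t n₂) has kernel equal to mN^2 = (mN)^2, the submodule of N^2 consisting of vectors both of whose coordinates lie in mN; in particular, this kernel is nonzero (it has length 2). -/

import Mathlib

set_option maxHeartbeats 1000000
set_option synthInstance.maxHeartbeats 400000

open CategoryTheory MvPolynomial

noncomputable section

/-- The ideal `(s², st, t²)` of the polynomial ring `K[s,t]`. -/
def sIdeal (K : Type) [Field K] : Ideal (MvPolynomial (Fin 2) K) :=
  Ideal.span {(X 0) ^ 2, (X 0) * (X 1), (X 1) ^ 2}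

/-- The ring `S = K[s,t]/(s², st, t²)`. -/
abbrev Sring (K : Type) [Field K] : Type := MvPolynomial (Fin 2) K ⧸ sIdeal K

/-- The image `s` of the first variable in `S`. -/
def sElt (K : Type) [Field K] : Sring K := Ideal.Quotient.mk _ (X 0)

/-- The image `t` of the second variable in `S`. -/
def tElt (K : Type) [Field K] : Sring K := Ideal.Quotient.mk _ (X 1)

/-- The submodule `U` of `S²` generated by `(t,0)`, `(0,s)` and `(s,t)`. -/
def Usub (K : Type) [Field K] : Submodule (Sring K) (Fin 2 → Sring K) :=
  Submodule.span _ {![tElt K, 0], ![0, sElt K], ![sElt K, tElt K]}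

/-- The module `N = S²/U`. -/
abbrev Nmod (K : Type) [Field K] : Type := (Fin 2 → Sring K) ⧸ Usub K

/-- The maximal ideal `m = (s,t)` of `S`. -/
def mIdeal (K : Type) [Field K] : Ideal (Sring K) := Ideal.span {sElt K, tElt K}

/-- The matrix `X̄` with rows `(s,0,t,0)` and `(0,s,0,t)`. -/
def Xbar (K : Type) [Field K] : Matrix (Fin 2) (Fin 4) (Sring K) :=
  !![sElt K, 0, tElt K, 0; 0, sElt K, 0, tElt K]

/-- The matrix `Ȳ = (sI₄ | tI₄)`. -/
def Ybar (K : Type) [Field K] : Matrix (Fin 4) (Fin 8) (Sring K) :=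
  fun i j => if (j : ℕ) = (i : ℕ) then sElt K
    else if (j : ℕ) = (i : ℕ) + 4 then tElt K else 0

/-- The `S`-linear map `v ↦ v A` on row vectors with entries in an `S`-module `M`,
for a matrix `A` over `S`. -/
def rowVecMulMap {S : Type} [CommRing S] {M : Type} [AddCommGroup M] [Module S M]
    {a b : ℕ} (A : Matrix (Fin a) (Fin b) S) : (Fin a → M) →ₗ[S] (Fin b → M) where
  toFun v := fun j => ∑ i, A i j • v i
  map_add' u v := by
    funext j
    simp [smul_add, Finset.sum_add_distrib]
  map_smul' c v := by
    funext j
    show (∑ i, A i j • (c • v) i) = c • ∑ i, A i j • v i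
    rw [Finset.smul_sum]
    refine Finset.sum_congr rfl fun i _ => ?_
    rw [Pi.smul_apply, smul_comm]

/-!
As a vector space `S = K ⊕ K s ⊕ K t` with `m² = 0`, so every `r ∈ S` acts on `m` through its
residue `ε(r) ∈ K`. In `N` the products of `s, t` with the classes of `(1,0)` and `(0,1)` are
`w, 0, 0, -w`, where `w = [(s,0)] = -[(0,t)]`, and `w ≠ 0` because `U` satisfies a linear
relation that `(s,0)` violates. Hence `s [p] = ε(p₀) w` and `t [p] = -ε(p₁) w`, so the elements
of `N` killed by `s` and `t` are exactly `mN = S w ≅ S/m`. Since `v X̄ = 0` says that `s` and `t`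
kill both coordinates of `v`, the kernel is `(mN)²`, an extension of the simple module `S/m` by
itself.
-/

open TrivSqZeroExt

theorem AlgHom.ker_eq_span_of_adjoin_eq_top {R A : Type*} [CommRing R] [CommRing A]
    [Algebra R A] (ε : A →ₐ[R] R) {G : Set A} (hG : Algebra.adjoin R G = ⊤)
    (hε : ∀ g ∈ G, ε g = 0) : RingHom.ker ε = Ideal.span G := by
  refine le_antisymm (fun x hx => ?_) (Ideal.span_le.2 fun g hg => hε g hg)
  have key : ∀ y, y - algebraMap R A (ε y) ∈ Ideal.span G := fun y => by
    induction (hG ▸ Algebra.mem_top : y ∈ Algebra.adjoin R G) using Algebra.adjoin_induction with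
    | mem g hg => simpa [hε g hg] using Ideal.subset_span hg
    | algebraMap r => simp
    | add x y _ _ hx hy => simpa [add_sub_add_comm] using add_mem hx hy
    | mul x y _ _ hx hy =>
      have : x * y - algebraMap R A (ε (x * y)) = (x - algebraMap R A (ε x)) * y
          + algebraMap R A (ε x) * (y - algebraMap R A (ε y)) := by
        rw [map_mul, map_mul]
        ring
      rw [this]
      exact add_mem (Ideal.mul_mem_right _ _ hx) (Ideal.mul_mem_left _ _ hy)
  simpa [RingHom.mem_ker.1 hx] using key x

theorem rowVecMulMap_eq_zero_iff {S M : Type} [CommRing S] [AddCommGroup M] [Module S M]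
    (s t : S) (v : Fin 2 → M) :
    rowVecMulMap !![s, 0, t, 0; 0, s, 0, t] v = 0 ↔ ∀ i, s • v i = 0 ∧ t • v i = 0 := by
  simp [rowVecMulMap, funext_iff, Fin.forall_fin_succ, and_assoc, and_comm, and_left_comm]

section CompositionSeries

variable {R M : Type*} [Ring R] [AddCommGroup M] [Module R M]

theorem exists_compositionSeries_length_two (A : Submodule R M) [IsSimpleModule R A]
    [IsSimpleModule R (M ⧸ A)] :
    ∃ c : CompositionSeries (Submodule R M), c.head = ⊥ ∧ c.last = ⊤ ∧ c.length = 2 :=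
  ⟨{ length := 2
     toFun := ![⊥, A, ⊤]
     step := fun i => by
       fin_cases i
       · exact bot_covBy_iff.2 (isSimpleModule_iff_isAtom.1 ‹_›)
       · exact covBy_top_iff.2 (isSimpleModule_iff_isCoatom.1 ‹_›) }, rfl, rfl, rfl⟩

theorem Submodule.pi_ne_bot {ι : Type*} [DecidableEq ι] {p : ι → Submodule R M} (i : ι)
    (hi : p i ≠ ⊥) : Submodule.pi Set.univ p ≠ ⊥ := by
  obtain ⟨x, hx, hx0⟩ := (Submodule.ne_bot_iff _).1 hi
  refine (Submodule.ne_bot_iff _).2 ⟨Pi.single i x, fun j _ => ?_, by simpa using hx0⟩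
  rcases eq_or_ne j i with rfl | hj
  · simpa using hx
  · simp [hj]

theorem Submodule.exists_compositionSeries_pi_fin_two (P : Submodule R M) [IsSimpleModule R P] :
    ∃ c : CompositionSeries (Submodule R ↥(Submodule.pi Set.univ fun _ : Fin 2 => P)),
      c.head = ⊥ ∧ c.last = ⊤ ∧ c.length = 2 := by
  set Q := Submodule.pi Set.univ fun _ : Fin 2 => P
  have single_mem : ∀ (i : Fin 2) (x : P), Pi.single i (x : M) ∈ Q := fun i x j _ => by
    rcases eq_or_ne j i with rfl | hj
    · simp
    · simp [hj]
  let f : Q →ₗ[R] P :=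
    { toFun v := ⟨(v : Fin 2 → M) 1, v.2 1 trivial⟩
      map_add' _ _ := rfl
      map_smul' _ _ := rfl }
  let g : P →ₗ[R] Q :=
    { toFun x := ⟨Pi.single 0 (x : M), single_mem 0 x⟩
      map_add' x y := Subtype.ext (Pi.single_add (f := fun _ : Fin 2 => M) 0 x y)
      map_smul' r x := Subtype.ext (Pi.single_smul (f := fun _ : Fin 2 => M) 0 r (x : M)) }
  have hf : Function.Surjective f := fun x =>
    ⟨⟨_, single_mem 1 x⟩, Subtype.ext (by simp [f])⟩
  have hg : Function.Injective g := fun x y h => Subtype.ext <| by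
    simpa [g] using congrArg (fun v : Q => (v : Fin 2 → M) 0) h
  have hgf : LinearMap.range g = LinearMap.ker f := by
    ext v
    simp only [LinearMap.mem_range, LinearMap.mem_ker]
    constructor
    · rintro ⟨x, rfl⟩
      ext
      simp [f, g]
    · intro hv
      refine ⟨⟨(v : Fin 2 → M) 0, v.2 0 trivial⟩, Subtype.ext (funext fun i => ?_)⟩
      fin_cases i
      · simp [g]
      · simpa [f, g] using (congrArg Subtype.val hv).symm
  have : IsSimpleModule R (LinearMap.ker f) :=
    hgf ▸ IsSimpleModule.congr (LinearEquiv.ofInjective g hg).symm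
  have : IsSimpleModule R (Q ⧸ LinearMap.ker f) :=
    IsSimpleModule.congr (f.quotKerEquivOfSurjective hf)
  exact exists_compositionSeries_length_two (LinearMap.ker f)

end CompositionSeries

section

variable (K : Type) [Field K]

theorem mk_sIdeal_generator_eq_zero {p : MvPolynomial (Fin 2) K}
    (hp : p ∈ ({X 0 ^ 2, X 0 * X 1, X 1 ^ 2} : Set (MvPolynomial (Fin 2) K))) :
    Ideal.Quotient.mk (sIdeal K) p = 0 :=
  Ideal.Quotient.eq_zero_iff_mem.2 (Ideal.subset_span hp)

theorem sElt_mul_sElt : sElt K * sElt K = 0 := by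
  rw [sElt, ← map_mul, ← sq]
  exact mk_sIdeal_generator_eq_zero K (by simp)

theorem sElt_mul_tElt : sElt K * tElt K = 0 := by
  rw [sElt, tElt, ← map_mul]
  exact mk_sIdeal_generator_eq_zero K (by simp)

theorem tElt_mul_tElt : tElt K * tElt K = 0 := by
  rw [tElt, ← map_mul, ← sq]
  exact mk_sIdeal_generator_eq_zero K (by simp)

/-- In fact an isomorphism `S ≅ K ⊕ (K s ⊕ K t)`; it provides the residue map and the
coefficients of `s` and `t`. -/
def Sring.toTrivSqZeroExt : Sring K →ₐ[K] TrivSqZeroExt K (Fin 2 → K) :=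
  Ideal.Quotient.liftₐ _ (aeval fun i => inr (Pi.single i 1)) fun p hp => by
    refine RingHom.mem_ker.1 ((Ideal.span_le (I := RingHom.ker _)).2 ?_ hp)
    rintro x (rfl | rfl | rfl) <;> simp [RingHom.mem_ker, sq, inr_mul_inr]

theorem Sring.toTrivSqZeroExt_mk_X (i : Fin 2) :
    Sring.toTrivSqZeroExt K (Ideal.Quotient.mk _ (X i)) = inr (Pi.single i 1) := by
  rw [← Ideal.Quotient.mkₐ_eq_mk K, ← AlgHom.comp_apply, Sring.toTrivSqZeroExt,
    Ideal.Quotient.liftₐ_comp, aeval_X]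

@[simp]
theorem Sring.toTrivSqZeroExt_sElt : Sring.toTrivSqZeroExt K (sElt K) = inr (Pi.single 0 1) :=
  Sring.toTrivSqZeroExt_mk_X K 0

@[simp]
theorem Sring.toTrivSqZeroExt_tElt : Sring.toTrivSqZeroExt K (tElt K) = inr (Pi.single 1 1) :=
  Sring.toTrivSqZeroExt_mk_X K 1

def Sring.residue : Sring K →ₐ[K] K :=
  (fstHom K K (Fin 2 → K)).comp (Sring.toTrivSqZeroExt K)

@[simp]
theorem Sring.residue_sElt : Sring.residue K (sElt K) = 0 := by simp [Sring.residue]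

@[simp]
theorem Sring.residue_tElt : Sring.residue K (tElt K) = 0 := by simp [Sring.residue]

theorem Sring.adjoin_sElt_tElt : Algebra.adjoin K {sElt K, tElt K} = ⊤ := by
  have : {sElt K, tElt K} = Ideal.Quotient.mkₐ K (sIdeal K) '' Set.range X := by
    ext x
    simp [sElt, tElt, Fin.exists_fin_two, eq_comm]
  rw [this, Algebra.adjoin_image, MvPolynomial.adjoin_range_X, Algebra.map_top,
    AlgHom.range_eq_top]
  exact Ideal.Quotient.mkₐ_surjective K _

theorem Sring.ker_residue : RingHom.ker (Sring.residue K) = mIdeal K :=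
  (Sring.residue K).ker_eq_span_of_adjoin_eq_top (Sring.adjoin_sElt_tElt K) (by simp)

instance mIdeal_isMaximal : (mIdeal K).IsMaximal :=
  Sring.ker_residue K ▸ RingHom.ker_isMaximal_of_surjective _
    fun c => ⟨algebraMap K (Sring K) c, (Sring.residue K).commutes c⟩

theorem sElt_mem_mIdeal : sElt K ∈ mIdeal K := Ideal.subset_span (by simp)

theorem tElt_mem_mIdeal : tElt K ∈ mIdeal K := Ideal.subset_span (by simp)

theorem mIdeal_mul_self : mIdeal K * mIdeal K = ⊥ := by
  rw [mIdeal, Ideal.span_mul_span', Ideal.span_eq_bot]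
  rintro _ ⟨x, hx, y, hy, rfl⟩
  rcases hx with rfl | rfl <;> rcases hy with rfl | rfl <;>
    simp [sElt_mul_sElt, sElt_mul_tElt, tElt_mul_tElt, mul_comm (tElt K)]

theorem Sring.mul_eq_residue_smul (r : Sring K) {x : Sring K} (hx : x ∈ mIdeal K) :
    r * x = Sring.residue K r • x := by
  have hr : r - algebraMap K _ (Sring.residue K r) ∈ mIdeal K := by
    rw [← Sring.ker_residue]
    simp [RingHom.mem_ker]
  have : (r - algebraMap K _ (Sring.residue K r)) * x = 0 := by
    simpa [mIdeal_mul_self] using Ideal.mul_mem_mul hr hx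
  rw [Algebra.smul_def (A := Sring K), ← sub_eq_zero, ← sub_mul, this]

/-- A linear invariant of `U` which `(s, 0)` violates, so that `wN ≠ 0`. -/
theorem mem_mIdeal_and_snd_eq_of_mem_Usub {p : Fin 2 → Sring K} (hp : p ∈ Usub K) :
    p 0 ∈ mIdeal K ∧ p 1 ∈ mIdeal K ∧
      (Sring.toTrivSqZeroExt K (p 0)).snd 0 = (Sring.toTrivSqZeroExt K (p 1)).snd 1 := by
  induction hp using Submodule.span_induction with
  | mem g hg =>
    rcases hg with rfl | rfl | rfl <;> simp [sElt_mem_mIdeal, tElt_mem_mIdeal]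
  | zero => simp
  | add p q _ _ hp hq =>
    exact ⟨add_mem hp.1 hq.1, add_mem hp.2.1 hq.2.1, by simp [hp.2.2, hq.2.2]⟩
  | smul r p _ hp =>
    refine ⟨Ideal.mul_mem_left _ r hp.1, Ideal.mul_mem_left _ r hp.2.1, ?_⟩
    simp [Sring.mul_eq_residue_smul K r hp.1, Sring.mul_eq_residue_smul K r hp.2.1, hp.2.2]

def wN : Nmod K := Submodule.Quotient.mk ![sElt K, 0]

theorem wN_ne_zero : wN K ≠ 0 := fun h => by
  simpa using (mem_mIdeal_and_snd_eq_of_mem_Usub K ((Submodule.Quotient.mk_eq_zero _).1 h)).2.2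

theorem mk_Usub_generator_eq_zero {u : Fin 2 → Sring K}
    (hu : u ∈ ({![tElt K, 0], ![0, sElt K], ![sElt K, tElt K]} : Set (Fin 2 → Sring K))) :
    (Submodule.Quotient.mk u : Nmod K) = 0 :=
  (Submodule.Quotient.mk_eq_zero _).2 (Submodule.subset_span hu)

theorem sElt_smul_mk (p : Fin 2 → Sring K) :
    sElt K • (Submodule.Quotient.mk p : Nmod K) = Sring.residue K (p 0) • wN K := by
  have hsp : sElt K • p =
      Sring.residue K (p 0) • ![sElt K, 0] + Sring.residue K (p 1) • ![0, sElt K] := by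
    ext i
    fin_cases i <;> simp [mul_comm (sElt K), Sring.mul_eq_residue_smul K _ (sElt_mem_mIdeal K)]
  rw [← Submodule.Quotient.mk_smul, hsp, Submodule.Quotient.mk_add, Submodule.Quotient.mk_smul,
    Submodule.Quotient.mk_smul, mk_Usub_generator_eq_zero K (u := ![0, sElt K]) (by simp),
    smul_zero, add_zero, wN]

theorem tElt_smul_mk (p : Fin 2 → Sring K) :
    tElt K • (Submodule.Quotient.mk p : Nmod K) = -(Sring.residue K (p 1) • wN K) := by
  have htp : tElt K • p =
      Sring.residue K (p 0) • ![tElt K, 0] + Sring.residue K (p 1) • ![0, tElt K] := by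
    ext i
    fin_cases i <;> simp [mul_comm (tElt K), Sring.mul_eq_residue_smul K _ (tElt_mem_mIdeal K)]
  have h0t : (Submodule.Quotient.mk ![0, tElt K] : Nmod K) = -wN K := by
    rw [eq_neg_iff_add_eq_zero, wN, ← Submodule.Quotient.mk_add]
    exact mk_Usub_generator_eq_zero K (by simp)
  rw [← Submodule.Quotient.mk_smul, htp, Submodule.Quotient.mk_add, Submodule.Quotient.mk_smul,
    Submodule.Quotient.mk_smul, mk_Usub_generator_eq_zero K (u := ![tElt K, 0]) (by simp),
    smul_zero, zero_add, h0t, smul_neg]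

theorem mIdeal_smul_top_eq_span :
    mIdeal K • (⊤ : Submodule (Sring K) (Nmod K)) = Submodule.span (Sring K) {wN K} := by
  have hw : ∀ c : K, c • wN K ∈ Submodule.span (Sring K) {wN K} := fun c =>
    Submodule.smul_of_tower_mem _ c (Submodule.mem_span_singleton_self _)
  refine le_antisymm (Submodule.smul_le.2 fun r hr n _ => ?_) ?_
  · obtain ⟨a, b, rfl⟩ := Ideal.mem_span_pair.1 hr
    obtain ⟨p, rfl⟩ := Submodule.Quotient.mk_surjective _ n
    rw [add_smul, mul_smul, mul_smul, sElt_smul_mk, tElt_smul_mk]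
    exact add_mem (Submodule.smul_mem _ _ (hw _)) (Submodule.smul_mem _ _ (neg_mem (hw _)))
  · have : wN K = sElt K • (Submodule.Quotient.mk ![1, 0] : Nmod K) := by simp [sElt_smul_mk]
    rw [Submodule.span_le, Set.singleton_subset_iff, SetLike.mem_coe, this]
    exact Submodule.smul_mem_smul (sElt_mem_mIdeal K) Submodule.mem_top

theorem torsionOf_wN : Ideal.torsionOf (Sring K) (Nmod K) (wN K) = mIdeal K := by
  refine (Ideal.IsMaximal.eq_of_le inferInstance ?_ ?_).symm
  · exact (Ideal.torsionOf_eq_top_iff _ _).not.2 (wN_ne_zero K)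
  · rw [mIdeal, Ideal.span_le]
    rintro _ (rfl | rfl) <;> simp [wN, sElt_smul_mk, tElt_smul_mk]

instance isSimpleModule_mIdeal_smul_top :
    IsSimpleModule (Sring K) ↥(mIdeal K • (⊤ : Submodule (Sring K) (Nmod K))) := by
  have : IsSimpleModule (Sring K) (Sring K ⧸ Ideal.torsionOf (Sring K) (Nmod K) (wN K)) := by
    rw [isSimpleModule_iff_isCoatom, torsionOf_wN]
    exact Ideal.isMaximal_def.1 inferInstance
  rw [mIdeal_smul_top_eq_span]
  exact IsSimpleModule.congr (Ideal.quotTorsionOfEquivSpanSingleton _ _ _).symm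

theorem smul_eq_zero_iff_mem_mIdeal_smul_top (x : Nmod K) :
    sElt K • x = 0 ∧ tElt K • x = 0 ↔ x ∈ mIdeal K • (⊤ : Submodule (Sring K) (Nmod K)) := by
  refine ⟨fun ⟨hs, ht⟩ => ?_, fun hx => ?_⟩
  · obtain ⟨p, rfl⟩ := Submodule.Quotient.mk_surjective _ x
    have hp : ∀ i, p i ∈ mIdeal K := by
      rw [sElt_smul_mk] at hs
      rw [tElt_smul_mk, neg_eq_zero] at ht
      simp only [smul_eq_zero, wN_ne_zero, or_false] at hs ht
      intro i
      fin_cases i <;> simpa [← Sring.ker_residue]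
    have : p = p 0 • ![1, 0] + p 1 • ![0, 1] := by
      ext i
      fin_cases i <;> simp
    rw [this, Submodule.Quotient.mk_add, Submodule.Quotient.mk_smul, Submodule.Quotient.mk_smul]
    exact add_mem (Submodule.smul_mem_smul (hp 0) Submodule.mem_top)
      (Submodule.smul_mem_smul (hp 1) Submodule.mem_top)
  · have h : ∀ r ∈ mIdeal K, r • x = 0 := fun r hr => by
      have := Submodule.smul_mem_smul hr hx
      rwa [← Submodule.mul_smul, mIdeal_mul_self, Submodule.bot_smul, Submodule.mem_bot] at this
    exact ⟨h _ (sElt_mem_mIdeal K), h _ (tElt_mem_mIdeal K)⟩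

theorem ker_rowVecMulMap_Xbar : LinearMap.ker (rowVecMulMap (M := Nmod K) (Xbar K)) =
    Submodule.pi Set.univ fun _ : Fin 2 => mIdeal K • (⊤ : Submodule (Sring K) (Nmod K)) := by
  ext v
  simp [Xbar, rowVecMulMap_eq_zero_iff, smul_eq_zero_iff_mem_mIdeal_smul_top]

end

/-- The `S`-linear map `N² → N⁴`, `v ↦ v X̄`, has kernel `(mN)²`, the submodule of `N²`
consisting of vectors both of whose coordinates lie in `mN`; in particular the kernel is
nonzero (it has length 2, i.e. it admits a composition series of length 2). -/
theorem stmt_10 (K : Type) [Field K] :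
    LinearMap.ker (rowVecMulMap (M := Nmod K) (Xbar K)) =
      Submodule.pi Set.univ
        (fun _ : Fin 2 => mIdeal K • (⊤ : Submodule (Sring K) (Nmod K))) ∧
    LinearMap.ker (rowVecMulMap (M := Nmod K) (Xbar K)) ≠ ⊥ ∧
    ∃ c : CompositionSeries
        (Submodule (Sring K) ↥(LinearMap.ker (rowVecMulMap (M := Nmod K) (Xbar K)))),
      c.head = ⊥ ∧ c.last = ⊤ ∧ c.length = 2 := by
  have hker := ker_rowVecMulMap_Xbar K
  refine ⟨hker, ?_, ?_⟩ <;> rw [hker]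
  · exact Submodule.pi_ne_bot 0 (IsSimpleModule.isAtom (R := Sring K)).1
  · exact Submodule.exists_compositionSeries_pi_fin_two _

end
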